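/- Let Q(t) = a_0 + a_1 t + ... + a_k t^k be a real polynomial with all roots real, and let T = a_0 + a_1 (d/dx) + ... + a_k (d/dx)^k be the corresponding linear differential operator with constant coefficients. Then for every real polynomial p with all roots real, the polynomial T(p) has all real roots and mesh M(T(p)) ≥ M(p). -/

import Mathlib

open Polynomial
open scoped ENNReal

noncomputable section

/-- A real polynomial is hyperbolic (all its roots are real) iff the number of its
real roots counted with multiplicity equals its degree. -/
def Hyperbolic (p : Polynomial ℝ) : Prop := p.roots.card = p.natDegree

/-- The list of real roots of `p` (with multiplicity), sorted in increasing order. -/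
def sortedRoots (p : Polynomial ℝ) : List ℝ := p.roots.sort (· ≤ ·)

/-- The mesh of `p`: the minimal distance between consecutive real roots of `p`
(counted with multiplicity); it is `⊤` if `p` has fewer than two real roots. -/
def mesh (p : Polynomial ℝ) : ℝ≥0∞ :=
  ⨅ i ∈ Finset.range ((sortedRoots p).length - 1),
    ENNReal.ofReal ((sortedRoots p).getD (i + 1) 0 - (sortedRoots p).getD i 0)

/-- The list of absolute values of the real roots of `p` (with multiplicity),
sorted in increasing order. -/
def sortedAbsRoots (p : Polynomial ℝ) : List ℝ := (p.roots.map (fun x => |x|)).sort (· ≤ ·)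

/-- The logarithmic mesh of `p`: the minimal quotient of consecutive absolute values of
roots of `p`, the roots being ordered so that `|x₁| ≤ |x₂| ≤ ⋯ ≤ |x_k|`;
it is `⊤` if `p` has fewer than two real roots. -/
def lmesh (p : Polynomial ℝ) : ℝ≥0∞ :=
  ⨅ i ∈ Finset.range ((sortedAbsRoots p).length - 1),
    ENNReal.ofReal ((sortedAbsRoots p).getD (i + 1) 0 / (sortedAbsRoots p).getD i 0)

/-- The diagonal operator associated with the sequence `α`, acting on `ℝ[x]`
by `x^i ↦ α i • x^i`. -/
def diagOp (α : ℕ → ℝ) (p : Polynomial ℝ) : Polynomial ℝ :=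
  ∑ i ∈ p.support, Polynomial.C (α i * p.coeff i) * Polynomial.X ^ i

/-- The polynomial `∑_{j=0}^k C(k,j) * a j * x^j` (binomial normalization). -/
def binPoly (k : ℕ) (a : ℕ → ℝ) : Polynomial ℝ :=
  ∑ j ∈ Finset.range (k + 1), Polynomial.C ((k.choose j : ℝ) * a j) * Polynomial.X ^ j

/-- The Schur–Szegő product of two polynomials of degree `k`: if
`P = ∑ C(k,j) aⱼ xʲ` and `Q = ∑ C(k,j) bⱼ xʲ`, then `P * Q = ∑ C(k,j) aⱼ bⱼ xʲ`,
i.e. the `j`-th coefficient of `P*Q` is `C(k,j)⁻¹ * (coeff j of P) * (coeff j of Q)`. -/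
def schurSzego (k : ℕ) (P Q : Polynomial ℝ) : Polynomial ℝ :=
  ∑ j ∈ Finset.range (k + 1),
    Polynomial.C ((k.choose j : ℝ)⁻¹ * P.coeff j * Q.coeff j) * Polynomial.X ^ j

/-- One-sided (non-strict) interlacing: writing the sorted roots of `f` as
`x₁ ≤ ⋯ ≤ x_n` and those of `g` as `y₁ ≤ ⋯ ≤ y_m`, we have
`x₁ ≤ y₁ ≤ x₂ ≤ y₂ ≤ ⋯`. -/
def InterlaceAux (f g : Polynomial ℝ) : Prop :=
  (∀ i < (sortedRoots f).length, (sortedRoots f).getD i 0 ≤ (sortedRoots g).getD i 0) ∧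
  (∀ i, i + 1 < (sortedRoots f).length →
    (sortedRoots g).getD i 0 ≤ (sortedRoots f).getD (i + 1) 0)

/-- The roots of `f` and `g` (non-strictly) interlace. -/
def RootsInterlace (f g : Polynomial ℝ) : Prop := InterlaceAux f g ∨ InterlaceAux g f

/-! Factor the symbol as `Q = c ∏ (X - r)`, so that `T = c ∏ (D - r)`; operators that preserve
hyperbolicity without decreasing the mesh form a monoid, so it suffices to treat one factor
`p ↦ p' - r p`. Its roots are the critical points of `e^{-rx} p(x)`: Rolle's theorem gives one
between any two consecutive roots of `p`, and for `r ≠ 0` the decay of `e^{-rx} p(x)` gives one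
more beyond all roots of `p`. Together with the multiple roots inherited from `p` this yields
`deg (p' - r p)` real roots.

If the roots `x₁ < ⋯ < x_n` of `p` are `m`-separated, the roots `z` of `p' - r p` are simple, not
roots of `p`, and solve `∑ 1 / (z - x_i) = r`. For two of them with `z < z' < z + m` this sum is
strictly smaller at `z'` if no `x_i` lies between them, and strictly larger otherwise, as one sees
by comparing `1 / (z - x_i)` with `1 / (z' - x_{i+1})`. -/

open Filter Set Topology

namespace Polynomial

theorem card_roots_le_card_roots_add {R : Type*} [CommRing R] [IsDomain R] [DecidableEq R]
    {p q : R[X]} {c : ℕ} (hmult : ∀ x, p.rootMultiplicity x - 1 ≤ q.rootMultiplicity x)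
    (hcard : p.roots.toFinset.card ≤ (q.roots.toFinset \ p.roots.toFinset).card + c) :
    Multiset.card p.roots ≤ Multiset.card q.roots + c :=
  calc
    Multiset.card p.roots = ∑ x ∈ p.roots.toFinset, p.roots.count x :=
      (Multiset.toFinset_sum_count_eq _).symm
    _ = ∑ x ∈ p.roots.toFinset, (p.roots.count x - 1 + 1) :=
      Finset.sum_congr rfl fun _ hx => (Nat.sub_add_cancel <|
        Multiset.count_pos.2 <| Multiset.mem_toFinset.1 hx).symm
    _ = (∑ x ∈ p.roots.toFinset, (p.rootMultiplicity x - 1)) + p.roots.toFinset.card := by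
      simp only [Finset.sum_add_distrib, Finset.card_eq_sum_ones, count_roots]
    _ ≤ (∑ x ∈ p.roots.toFinset, q.rootMultiplicity x) +
          ((q.roots.toFinset \ p.roots.toFinset).card + c) := by
      gcongr with x; exact hmult x
    _ ≤ (∑ x ∈ p.roots.toFinset, q.roots.count x) +
          ((∑ x ∈ q.roots.toFinset \ p.roots.toFinset, q.roots.count x) + c) := by
      simp only [← count_roots, Finset.card_eq_sum_ones]
      gcongr with x hx
      rw [Nat.succ_le_iff, Multiset.count_pos, ← Multiset.mem_toFinset]
      exact (Finset.mem_sdiff.1 hx).1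
    _ = Multiset.card q.roots + c := by
      rw [← add_assoc, ← Finset.sum_union Finset.disjoint_sdiff,
        Finset.union_sdiff_self_eq_union, ← Multiset.toFinset_sum_count_eq,
        ← Finset.sum_subset Finset.subset_union_right]
      intro x _ hx
      simpa only [Multiset.mem_toFinset, Multiset.count_eq_zero] using hx

theorem rootMultiplicity_sub_one_le_rootMultiplicity_derivative_sub_C_mul {p : ℝ[X]} {r : ℝ}
    (hq : derivative p - C r * p ≠ 0) (x : ℝ) :
    p.rootMultiplicity x - 1 ≤ (derivative p - C r * p).rootMultiplicity x := by
  have hp : (X - C x) ^ (p.rootMultiplicity x - 1) ∣ p :=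
    (pow_dvd_pow _ (Nat.sub_le _ _)).trans (pow_rootMultiplicity_dvd p x)
  rcases eq_or_ne (derivative p) 0 with hd | hd
  · have : p.rootMultiplicity x = 0 := by rw [eq_C_of_derivative_eq_zero hd, rootMultiplicity_C]
    omega
  have hp' : (X - C x) ^ (p.rootMultiplicity x - 1) ∣ derivative p :=
    (le_rootMultiplicity_iff hd).1 (rootMultiplicity_sub_one_le_derivative_rootMultiplicity p x)
  exact (le_rootMultiplicity_iff hq).2 (dvd_sub hp' (hp.mul_left _))

theorem degree_derivative_sub_C_mul {r : ℝ} (hr : r ≠ 0) (p : ℝ[X]) :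
    (derivative p - C r * p).degree = p.degree := by
  rcases eq_or_ne p 0 with rfl | hp
  · simp
  have hCp : (C r * p).degree = p.degree := degree_C_mul hr
  rw [degree_sub_eq_right_of_degree_lt (hCp ▸ degree_derivative_lt hp), hCp]

theorem derivative_sub_C_mul_ne_zero {r : ℝ} (hr : r ≠ 0) {p : ℝ[X]} (hp : p ≠ 0) :
    derivative p - C r * p ≠ 0 := by
  rwa [Ne, ← degree_eq_bot, degree_derivative_sub_C_mul hr, degree_eq_bot]

theorem hasDerivAt_exp_mul_eval (r : ℝ) (p : ℝ[X]) (x : ℝ) :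
    HasDerivAt (fun y => Real.exp (-(r * y)) * p.eval y)
      (Real.exp (-(r * x)) * (derivative p - C r * p).eval x) x := by
  have hlin : HasDerivAt (fun y => -(r * y)) (-r) x := by
    simpa using ((hasDerivAt_id x).const_mul (-r))
  refine (hlin.exp.mul (p.hasDerivAt x)).congr_deriv ?_
  simp only [eval_sub, eval_mul, eval_C]
  ring

theorem exists_isRoot_derivative_sub_C_mul_mem_Ioo (r : ℝ) {p : ℝ[X]} {x y : ℝ} (hxy : x < y)
    (hx : p.IsRoot x) (hy : p.IsRoot y) :
    ∃ z ∈ Ioo x y, (derivative p - C r * p).IsRoot z := by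
  obtain ⟨z, hz, hz0⟩ := exists_hasDerivAt_eq_zero hxy
    (fun w _ => (hasDerivAt_exp_mul_eval r p w).continuousAt.continuousWithinAt)
    (by simp [hx.eq_zero, hy.eq_zero]) fun w _ => hasDerivAt_exp_mul_eval r p w
  exact ⟨z, hz, (mul_eq_zero.1 hz0).resolve_left (Real.exp_ne_zero _)⟩

theorem tendsto_exp_mul_eval_atTop {r : ℝ} (hr : 0 < r) (p : ℝ[X]) :
    Tendsto (fun y => Real.exp (-(r * y)) * p.eval y) atTop (𝓝 0) := by
  refine ((p.comp (C r⁻¹ * X)).tendsto_div_exp_atTop.comp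
    (tendsto_id.const_mul_atTop hr)).congr fun y => ?_
  simp only [Function.comp, id, eval_comp, eval_mul, eval_C, eval_X,
    inv_mul_cancel_left₀ hr.ne', Real.exp_neg, div_eq_mul_inv]
  ring

theorem exists_gt_isRoot_derivative_sub_C_mul {r : ℝ} (hr : 0 < r) {p : ℝ[X]} (hp : p ≠ 0)
    {a : ℝ} (ha : p.IsRoot a) : ∃ z, a < z ∧ (derivative p - C r * p).IsRoot z := by
  set f := fun y => Real.exp (-(r * y)) * p.eval y
  obtain ⟨c, hac, hc⟩ := (Ioi_infinite a).exists_notMem_finite (p.finite_setOfPred_isRoot hp)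
  -- rescaling by `f c` makes `g` positive at `c` whatever the sign of `f c`
  set g := fun y => f y * f c
  have hgc : 0 < g c := mul_self_pos.2 (mul_ne_zero (Real.exp_ne_zero _) hc)
  have hga : g a = 0 := by simp [g, f, ha.eq_zero]
  have hg : Continuous g := by fun_prop
  obtain ⟨b, hgb, hcb⟩ : ∃ b, g b < g c ∧ c < b :=
    (((tendsto_exp_mul_eval_atTop hr p).mul_const (f c)).eventually
      (gt_mem_nhds (by rwa [zero_mul])) |>.and (eventually_gt_atTop c)).exists
  obtain ⟨w, hw, hmax⟩ := isCompact_Icc.exists_isMaxOn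
    (nonempty_Icc.2 (hac.out.le.trans hcb.le)) hg.continuousOn
  have hcw : g c ≤ g w := hmax ⟨hac.out.le, hcb.le⟩
  have hw' : w ∈ Ioo a b := ⟨lt_of_le_of_ne hw.1 (by rintro rfl; linarith),
    lt_of_le_of_ne hw.2 (by rintro rfl; linarith)⟩
  have hderiv := (hmax.isLocalMax (Icc_mem_nhds hw'.1 hw'.2)).hasDerivAt_eq_zero
    ((hasDerivAt_exp_mul_eval r p w).mul_const (f c))
  refine ⟨w, hw'.1, ?_⟩
  simpa [f, IsRoot, Real.exp_ne_zero, show p.eval c ≠ 0 from hc] using hderiv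

theorem exists_isRoot_derivative_sub_C_mul_beyond_roots {r : ℝ} (hr : r ≠ 0) {p : ℝ[X]}
    (hp : p.roots ≠ 0) :
    ∃ z, (derivative p - C r * p).IsRoot z ∧ ∀ x ∈ p.roots, 0 < r * (z - x) := by
  wlog hr' : 0 < r generalizing p r
  · obtain ⟨z, hz, hzx⟩ := this (r := -r) (p := p.comp (-X)) (neg_ne_zero.2 hr)
      (by simpa [roots_comp_neg_X] using hp) (by linarith [lt_of_le_of_ne (not_lt.1 hr') hr])
    have hrefl : derivative (p.comp (-X)) - C (-r) * p.comp (-X) =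
        -((derivative p - C r * p).comp (-X)) := by
      simp only [derivative_comp, derivative_neg, derivative_X, sub_comp, mul_comp, C_comp, C_neg]
      ring
    rw [hrefl, IsRoot, eval_neg, eval_comp, neg_eq_zero] at hz
    refine ⟨-z, by simpa using hz, fun x hx => ?_⟩
    have := hzx (-x) (by simpa [roots_comp_neg_X] using hx)
    linarith
  have hp0 : p ≠ 0 := by rintro rfl; simp at hp
  obtain ⟨a, ha, hmax⟩ := p.roots.toFinset.exists_max_image id
    (Multiset.toFinset_nonempty.2 hp)
  rw [Multiset.mem_toFinset] at ha
  obtain ⟨z, haz, hz⟩ := exists_gt_isRoot_derivative_sub_C_mul hr' hp0 ((mem_roots hp0).1 ha)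
  refine ⟨z, hz, fun x hx => mul_pos hr' ?_⟩
  linarith [show x ≤ a from hmax x (Multiset.mem_toFinset.2 hx)]

theorem card_roots_toFinset_le_card_roots_derivative_sub_C_mul_sdiff {r : ℝ} (hr : r ≠ 0)
    (p : ℝ[X]) :
    p.roots.toFinset.card ≤
      ((derivative p - C r * p).roots.toFinset \ p.roots.toFinset).card := by
  set q := derivative p - C r * p
  rcases eq_or_ne p.roots 0 with h0 | h0
  · simp [h0]
  have hp : p ≠ 0 := by rintro rfl; simp at h0
  have hq : q ≠ 0 := derivative_sub_C_mul_ne_zero hr hp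
  obtain ⟨z, hzq, hz⟩ := exists_isRoot_derivative_sub_C_mul_beyond_roots hr h0
  obtain ⟨x₀, hx₀⟩ := Multiset.exists_mem_of_ne_zero h0
  -- reflecting a root of `p` through `z` gives a point `M` such that `z` lies strictly between
  -- `M` and every root of `p`; the roots of `p` and `M` are then interleaved by roots of `q`
  set M := z + (z - x₀)
  have hbetween : ∀ x ∈ p.roots, (x < z ∧ z < M) ∨ (M < z ∧ z < x) := fun x hx => by
    rcases hr.lt_or_gt with hr | hr
    · have := neg_of_mul_pos_right (hz x hx) hr.le
      have := neg_of_mul_pos_right (hz x₀ hx₀) hr.le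
      right; constructor <;> linarith
    · have := pos_of_mul_pos_right (hz x hx) hr.le
      have := pos_of_mul_pos_right (hz x₀ hx₀) hr.le
      left; constructor <;> linarith
  have hM : M ∉ p.roots.toFinset := fun h => by
    rcases hbetween M (Multiset.mem_toFinset.1 h) with h | h <;> linarith
  have hzq' : z ∈ q.roots.toFinset := Multiset.mem_toFinset.2 ((mem_roots hq).2 hzq)
  have key := Finset.card_le_sdiff_of_interleaved
    (s := insert M p.roots.toFinset) (t := q.roots.toFinset) fun x hx y hy hxy _ => by
      rw [Finset.mem_insert, Multiset.mem_toFinset] at hx hy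
      rcases hx with rfl | hx <;> rcases hy with rfl | hy
      · exact absurd hxy (lt_irrefl _)
      · rcases hbetween y hy with h | h
        · linarith
        · exact ⟨z, hzq', h⟩
      · rcases hbetween x hx with h | h
        · exact ⟨z, hzq', h⟩
        · linarith
      · obtain ⟨w, hw, hwq⟩ := exists_isRoot_derivative_sub_C_mul_mem_Ioo r hxy
          ((mem_roots hp).1 hx) ((mem_roots hp).1 hy)
        exact ⟨w, Multiset.mem_toFinset.2 ((mem_roots hq).2 hwq), hw⟩
  rw [Finset.card_insert_of_notMem hM] at key
  have := Finset.card_le_card (Finset.sdiff_subset_sdiff (le_refl q.roots.toFinset)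
    (Finset.subset_insert M p.roots.toFinset))
  omega

theorem card_roots_le_card_roots_derivative_sub_C_mul {r : ℝ} (hr : r ≠ 0) (p : ℝ[X]) :
    Multiset.card p.roots ≤ Multiset.card (derivative p - C r * p).roots := by
  classical
  rcases eq_or_ne p 0 with rfl | hp
  · simp
  simpa using card_roots_le_card_roots_add (c := 0)
    (rootMultiplicity_sub_one_le_rootMultiplicity_derivative_sub_C_mul
      (derivative_sub_C_mul_ne_zero hr hp))
    (by simpa using card_roots_toFinset_le_card_roots_derivative_sub_C_mul_sdiff hr p)

theorem not_isRoot_of_mem_roots_derivative_sub_C_mul {p : ℝ[X]} {r z : ℝ} (hnd : p.roots.Nodup)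
    (hz : z ∈ (derivative p - C r * p).roots) : ¬p.IsRoot z := fun hpz => by
  have hq0 := ne_zero_of_mem_roots hz
  have hp0 : p ≠ 0 := by rintro rfl; simp at hq0
  have hdz : (derivative p).IsRoot z := by
    simpa [IsRoot, hpz.eq_zero] using (mem_roots hq0).1 hz
  have := (one_lt_rootMultiplicity_iff_isRoot hp0).2 ⟨hpz, hdz⟩
  rw [← count_roots] at this
  exact (Multiset.nodup_iff_count_le_one.1 hnd z).not_gt this

end Polynomial

theorem hyperbolic_iff_splits {p : ℝ[X]} : Hyperbolic p ↔ p.Splits :=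
  splits_iff_card_roots.symm

theorem Hyperbolic.derivative_sub_C_mul {p : ℝ[X]} (hp : Hyperbolic p) (r : ℝ) :
    Hyperbolic (derivative p - C r * p) := by
  refine le_antisymm (card_roots' _) ?_
  rcases eq_or_ne r 0 with rfl | hr
  · have := card_roots_le_derivative p
    rw [Hyperbolic] at hp
    simp only [C_0, zero_mul, sub_zero, natDegree_derivative]
    omega
  · rw [natDegree_eq_of_degree_eq (degree_derivative_sub_C_mul hr p), ← hp]
    exact card_roots_le_card_roots_derivative_sub_C_mul hr p

theorem Hyperbolic.nodup_roots_derivative_sub_C_mul {p : ℝ[X]} (hp : Hyperbolic p)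
    (hnd : p.roots.Nodup) (r : ℝ) : (derivative p - C r * p).roots.Nodup := by
  classical
  rw [← Multiset.toFinset_card_eq_card_iff_nodup]
  refine le_antisymm (Multiset.toFinset_card_le _) ((card_roots' _).trans ?_)
  have hA : p.roots.toFinset.card = p.natDegree := by
    rw [Multiset.toFinset_card_of_nodup hnd, hp]
  rcases eq_or_ne r 0 with rfl | hr
  · have := card_roots_toFinset_le_derivative p
    simp only [C_0, zero_mul, sub_zero, natDegree_derivative]
    omega
  · rw [natDegree_eq_of_degree_eq (degree_derivative_sub_C_mul hr p), ← hA]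
    exact (card_roots_toFinset_le_card_roots_derivative_sub_C_mul_sdiff hr p).trans
      (Finset.card_le_card Finset.sdiff_subset)

theorem ofReal_le_mesh_iff {p : ℝ[X]} {m : ℝ} (hm : 0 < m) :
    ENNReal.ofReal m ≤ mesh p ↔
      p.roots.Nodup ∧ ∀ x ∈ p.roots, ∀ y ∈ p.roots, x < y → x + m ≤ y := by
  obtain ⟨l, hl⟩ : ∃ l, sortedRoots p = l := ⟨_, rfl⟩
  have hsort : l.Pairwise (· ≤ ·) := hl ▸ Multiset.pairwise_sort _ _
  have hmem : ∀ {x}, x ∈ l ↔ x ∈ p.roots := hl ▸ Multiset.mem_sort _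
  have hnodup : l.Nodup ↔ p.roots.Nodup := by
    rw [← Multiset.coe_nodup, ← hl, sortedRoots, Multiset.sort_eq]
  let R : ℝ → ℝ → Prop := fun x y => x + m ≤ y
  have : Trans R R R := ⟨fun h₁ h₂ => by simp only [R] at *; linarith⟩
  have : Std.Symm fun x y => R x y ∨ R y x := ⟨fun _ _ h => h.symm⟩
  calc ENNReal.ofReal m ≤ mesh p ↔ l.IsChain R := by
        simp only [mesh, hl, le_iInf₂_iff, List.isChain_iff_getElem, Finset.mem_range,
          ENNReal.ofReal_le_ofReal_iff', hm.not_ge, or_false, R]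
        refine forall_congr' fun i => ⟨fun h hi => ?_, fun h hi => ?_⟩
        · have := h (by omega)
          rw [List.getD_eq_getElem _ _ hi, List.getD_eq_getElem _ _ (by omega)] at this
          linarith
        · have := h (by omega)
          rw [List.getD_eq_getElem _ _ (by omega), List.getD_eq_getElem _ _ (by omega)]
          linarith
    _ ↔ l.Pairwise R := List.isChain_iff_pairwise
    _ ↔ _ := by
      refine ⟨fun h => ⟨hnodup.1 (h.imp fun hxy => ?_), fun x hx y hy hxy => ?_⟩,
        fun ⟨hnd, hsep⟩ => (hsort.and (hnodup.2 hnd)).imp_of_mem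
          fun ha hb hab => hsep _ (hmem.1 ha) _ (hmem.1 hb) (lt_of_le_of_ne hab.1 hab.2)⟩
      · simp only [R] at hxy; linarith
      · rcases (h.imp (S := fun x y => R x y ∨ R y x) Or.inl).forall (hmem.2 hx) (hmem.2 hy)
          hxy.ne with h | h
        · exact h
        · simp only [R] at h; linarith

theorem sum_one_div_sub_lt_of_mem_Ioo {A : Finset ℝ} {m z z' a : ℝ}
    (hsep : ∀ x ∈ A, ∀ y ∈ A, x < y → x + m ≤ y) (hz : z ∉ A) (hzz' : z' < z + m)
    (ha : a ∈ A) (hza : z < a) (haz' : a < z') :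
    ∑ x ∈ A, 1 / (z - x) < ∑ x ∈ A, 1 / (z' - x) := by
  obtain ⟨n, hn⟩ := Nat.exists_eq_succ_of_ne_zero (Finset.card_ne_zero_of_mem ha)
  set e := A.orderEmbOfFin hn
  have hsum : ∀ f : ℝ → ℝ, ∑ x ∈ A, f x = ∑ i, f (e i) := fun f => by
    conv_lhs => rw [← A.map_orderEmbOfFin_univ hn, Finset.sum_map]
    rfl
  have he : ∀ i, e i ∈ A := A.orderEmbOfFin_mem hn
  obtain ⟨k, rfl⟩ : ∃ k, e k = a := by
    rwa [← Set.mem_range, Finset.range_orderEmbOfFin]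
  rw [hsum, hsum, Fin.sum_univ_castSucc, Fin.sum_univ_succ]
  -- pair the `j`-th root seen from `z` with the `(j+1)`-st root seen from `z'`
  have hstep : ∀ j : Fin n, 1 / (z - e j.castSucc) < 1 / (z' - e j.succ) := fun j => by
    have hgap := hsep _ (he _) _ (he _) (e.strictMono (Fin.castSucc_lt_succ (i := j)))
    rcases lt_or_gt_of_ne (fun h => hz (h ▸ he _) : e j.castSucc ≠ z) with h | h
    · have : e j.succ ≤ e k :=
        e.monotone (Fin.castSucc_lt_iff_succ_le.1 (e.lt_iff_lt.1 (h.trans hza)))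
      exact one_div_lt_one_div_of_lt (by linarith) (by linarith)
    · exact one_div_lt_one_div_of_neg_of_lt (by linarith) (by linarith)
  have hfirst : 0 < 1 / (z' - e 0) := one_div_pos.2 (by linarith [e.monotone (Fin.zero_le k)])
  have hlast : 1 / (z - e (Fin.last n)) < 0 :=
    one_div_neg.2 (by linarith [e.monotone (Fin.le_last k)])
  linarith [Finset.sum_le_sum fun j (_ : j ∈ Finset.univ) => (hstep j).le]

theorem sum_one_div_sub_lt_of_forall_lt_or_gt {s : Multiset ℝ} (hs : s ≠ 0) {z z' : ℝ}
    (hzz' : z < z') (h : ∀ x ∈ s, x < z ∨ z' < x) :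
    (s.map fun x => 1 / (z' - x)).sum < (s.map fun x => 1 / (z - x)).sum :=
  Multiset.sum_lt_sum_of_nonempty hs fun x hx => by
    rcases h x hx with h | h
    · exact one_div_lt_one_div_of_lt (by linarith) (by linarith)
    · exact one_div_lt_one_div_of_neg_of_lt (by linarith) (by linarith)

theorem Hyperbolic.sum_one_div_sub_roots_eq {p : ℝ[X]} (hp : Hyperbolic p) {r z : ℝ}
    (hq : (derivative p - C r * p).IsRoot z) (hz : ¬p.IsRoot z) :
    (p.roots.map fun x => 1 / (z - x)).sum = r := by
  rw [IsRoot, eval_sub, eval_mul, eval_C, sub_eq_zero,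
    (hyperbolic_iff_splits.1 hp).eval_derivative_eq_eval_mul_sum hz] at hq
  exact mul_left_cancel₀ hz (hq.trans (mul_comm _ _))

theorem Hyperbolic.add_le_of_mem_roots_derivative_sub_C_mul {p : ℝ[X]} (hp : Hyperbolic p)
    {m r z z' : ℝ} (hnd : p.roots.Nodup)
    (hsep : ∀ x ∈ p.roots, ∀ y ∈ p.roots, x < y → x + m ≤ y)
    (hz : z ∈ (derivative p - C r * p).roots) (hz' : z' ∈ (derivative p - C r * p).roots)
    (hzz' : z < z') : z + m ≤ z' := by
  by_contra! hlt
  have hq0 := ne_zero_of_mem_roots hz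
  have hp0 : p ≠ 0 := by rintro rfl; simp at hq0
  have hpz := not_isRoot_of_mem_roots_derivative_sub_C_mul hnd hz
  have hpz' := not_isRoot_of_mem_roots_derivative_sub_C_mul hnd hz'
  have hS := hp.sum_one_div_sub_roots_eq ((mem_roots hq0).1 hz) (hpz)
  have hS' := hp.sum_one_div_sub_roots_eq ((mem_roots hq0).1 hz') (hpz')
  by_cases hbetween : ∃ a ∈ p.roots, z < a ∧ a < z'
  · obtain ⟨a, ha, hza, haz'⟩ := hbetween
    have := sum_one_div_sub_lt_of_mem_Ioo (A := p.roots.toFinset) (by simpa using hsep)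
      (by simpa [mem_roots hp0] using hpz) hlt (by simpa using ha) hza haz'
    rw [Finset.sum_eq_multiset_sum, Finset.sum_eq_multiset_sum, Multiset.toFinset_val,
      hnd.dedup] at this
    linarith
  push Not at hbetween
  rcases eq_or_ne p.roots 0 with h0 | h0
  · have hr : r = 0 := by simpa [h0] using hS.symm
    have hdeg : p.natDegree = 0 := by rw [← hp, h0, Multiset.card_zero]
    simp [hr, derivative_of_natDegree_zero hdeg] at hq0
  have := sum_one_div_sub_lt_of_forall_lt_or_gt h0 hzz' fun x hx => by
    have hxz : x ≠ z := fun h => hpz (h ▸ (mem_roots hp0).1 hx)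
    have hxz' : x ≠ z' := fun h => hpz' (h ▸ (mem_roots hp0).1 hx)
    rcases lt_or_gt_of_ne hxz with h | h
    · exact Or.inl h
    · exact Or.inr (lt_of_le_of_ne (hbetween x hx h) hxz'.symm)
  linarith

theorem Hyperbolic.mesh_le_mesh_derivative_sub_C_mul {p : ℝ[X]} (hp : Hyperbolic p) (r : ℝ) :
    mesh p ≤ mesh (derivative p - C r * p) := by
  refine ENNReal.le_of_forall_pos_nnreal_lt fun m hm hlt => ?_
  rw [← ENNReal.ofReal_coe_nnreal] at hlt ⊢
  obtain ⟨hnd, hsep⟩ := (ofReal_le_mesh_iff (NNReal.coe_pos.2 hm)).1 hlt.le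
  exact (ofReal_le_mesh_iff (NNReal.coe_pos.2 hm)).2 ⟨hp.nodup_roots_derivative_sub_C_mul hnd r,
    fun z hz z' hz' hzz' => hp.add_le_of_mem_roots_derivative_sub_C_mul hnd hsep hz hz' hzz'⟩

def meshNondecreasing : Submonoid (Module.End ℝ ℝ[X]) where
  carrier := {T | ∀ p, Hyperbolic p → Hyperbolic (T p) ∧ mesh p ≤ mesh (T p)}
  one_mem' _ hp := ⟨hp, le_rfl⟩
  mul_mem' hS hT p hp :=
    ⟨(hS _ (hT p hp).1).1, (hT p hp).2.trans (hS _ (hT p hp).1).2⟩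

theorem algebraMap_mem_meshNondecreasing (c : ℝ) :
    algebraMap ℝ (Module.End ℝ ℝ[X]) c ∈ meshNondecreasing := fun p hp => by
  rw [Module.algebraMap_end_apply]
  rcases eq_or_ne c 0 with rfl | hc
  · simp [Hyperbolic, mesh, sortedRoots]
  · have hroots : (c • p).roots = p.roots := roots_smul_nonzero _ hc
    simp only [Hyperbolic, mesh, sortedRoots, hroots, natDegree_smul _ hc]
    exact ⟨hp, le_rfl⟩

theorem aeval_derivative_X_sub_C_mem_meshNondecreasing (r : ℝ) :
    aeval (derivative : Module.End ℝ ℝ[X]) (X - C r) ∈ meshNondecreasing := fun p hp => by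
  have : aeval (derivative : Module.End ℝ ℝ[X]) (X - C r) p = derivative p - C r * p := by
    simp [Module.algebraMap_end_apply, smul_eq_C_mul]
  rw [this]
  exact ⟨hp.derivative_sub_C_mul r, hp.mesh_le_mesh_derivative_sub_C_mul r⟩

theorem Hyperbolic.aeval_derivative_mem_meshNondecreasing {Q : ℝ[X]} (hQ : Hyperbolic Q) :
    aeval (derivative : Module.End ℝ ℝ[X]) Q ∈ meshNondecreasing := by
  change Q ∈ meshNondecreasing.comap (aeval (derivative : Module.End ℝ ℝ[X])).toMonoidHom
  rw [(hyperbolic_iff_splits.1 hQ).eq_prod_roots]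
  refine mul_mem ?_ (Submonoid.multiset_prod_mem _ _ ?_)
  · simpa using algebraMap_mem_meshNondecreasing Q.leadingCoeff
  · simp only [Multiset.mem_map, forall_exists_index, and_imp]
    rintro _ r - rfl
    exact aeval_derivative_X_sub_C_mem_meshNondecreasing r

theorem aeval_derivative_sum_C_mul_X_pow_apply (k : ℕ) (a : ℕ → ℝ) (p : ℝ[X]) :
    aeval (derivative : Module.End ℝ ℝ[X]) (∑ j ∈ Finset.range (k + 1), C (a j) * X ^ j) p =
      ∑ j ∈ Finset.range (k + 1), C (a j) * derivative^[j] p := by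
  simp [Module.End.mul_apply, Module.End.pow_apply, Module.algebraMap_end_apply, smul_eq_C_mul]

/-- If the symbol polynomial `Q(t) = a₀ + a₁ t + ⋯ + a_k t^k` is hyperbolic, then the
differential operator `T = a₀ + a₁ d/dx + ⋯ + a_k (d/dx)^k` sends every hyperbolic
polynomial `p` to a hyperbolic polynomial, and `M(T(p)) ≥ M(p)`. -/
theorem stmt_1 (k : ℕ) (a : ℕ → ℝ)
    (hQ : Hyperbolic (∑ j ∈ Finset.range (k + 1), Polynomial.C (a j) * Polynomial.X ^ j))
    (p : Polynomial ℝ) (hp : Hyperbolic p) :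
    Hyperbolic (∑ j ∈ Finset.range (k + 1),
      Polynomial.C (a j) * (fun q : Polynomial ℝ => Polynomial.derivative q)^[j] p) ∧
    mesh p ≤ mesh (∑ j ∈ Finset.range (k + 1),
      Polynomial.C (a j) * (fun q : Polynomial ℝ => Polynomial.derivative q)^[j] p) := by
  rw [← aeval_derivative_sum_C_mul_X_pow_apply]
  exact hQ.aeval_derivative_mem_meshNondecreasing p hp

end
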